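/- Define FL : ℝ¹² → ℝ¹⁰ by FL(x, t, u, u₁, u₂, u₂₀, u₁₁, u₀₂, u₃₀, u₂₁, u₁₂, u₀₃) := (x, t, u, u₁, u₂, ½u₂ − 3u₁² + u₃₀, ½u₁, −u₂₀, 0, 0) (the restricted Legendre map of the KdV Lagrangian L = ½(u₁u₂ − 2u₁³ − u₂₀²)). Then: (a) the total derivative of FL has rank exactly 7 at every point of ℝ¹²; in particular FL is nowhere a submersion onto ℝ¹⁰, so the KdV Lagrangian is singular; and (b) the image of FL equals the set { (x, t, u, u₁, u₂, p¹, p², p²⁰, p¹¹, p⁰²) ∈ ℝ¹⁰ : p² = ½u₁, p¹¹ = 0, p⁰² = 0 }. -/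

import Mathlib

noncomputable section

/-- The restricted Legendre map of the KdV Lagrangian `L = ½(u₁u₂ − 2u₁³ − u₂₀²)`, in
coordinates `(x, t, u, u₁, u₂, u₂₀, u₁₁, u₀₂, u₃₀, u₂₁, u₁₂, u₀₃) ↦
(x, t, u, u₁, u₂, p¹, p², p²⁰, p¹¹, p⁰²)`. -/
def FLkdv : (Fin 12 → ℝ) → (Fin 10 → ℝ) := fun v =>
  ![v 0, v 1, v 2, v 3, v 4, (1 / 2) * v 4 - 3 * v 3 ^ 2 + v 8, (1 / 2) * v 3,
    -v 5, 0, 0]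

/-!
`FLkdv` is linear except for the term `-3u₁²` in `p¹`, and that slot also contains `u₃₀`,
which enters nowhere else. Hence `FLkdv` and each of its derivatives are maps of the form
`v ↦ (v₀, …, v₄, g(v₃, v₄) + v₈, ½v₃, -v₅, 0, 0)`, and every such map has as image exactly
the 7-dimensional subspace `{p² = ½u₁, p¹¹ = 0, p⁰² = 0}`: the free coordinate `v₈`
absorbs `g`. So the rank is 7 everywhere, and it is less than 10.
-/

open ContinuousLinearMap

def kdvConstraints : (Fin 10 → ℝ) →ₗ[ℝ] (Fin 3 → ℝ) :=
  LinearMap.pi (![LinearMap.proj 6 - (1 / 2 : ℝ) • LinearMap.proj 3, LinearMap.proj 8,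
    LinearMap.proj 9] : Fin 3 → (Fin 10 → ℝ) →ₗ[ℝ] ℝ)

theorem mem_ker_kdvConstraints {w : Fin 10 → ℝ} :
    w ∈ LinearMap.ker kdvConstraints ↔ w 6 = (1 / 2) * w 3 ∧ w 8 = 0 ∧ w 9 = 0 := by
  simp [kdvConstraints, funext_iff, Fin.forall_fin_succ, sub_eq_zero]

theorem kdvConstraints_surjective : Function.Surjective kdvConstraints := fun y =>
  ⟨![0, 0, 0, 0, 0, 0, y 0, 0, y 1, y 2], by
    ext j; fin_cases j <;> simp [kdvConstraints]⟩

theorem finrank_ker_kdvConstraints : Module.finrank ℝ (LinearMap.ker kdvConstraints) = 7 := by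
  have h := LinearMap.finrank_range_add_finrank_ker kdvConstraints
  rw [LinearMap.range_eq_top.mpr kdvConstraints_surjective, finrank_top,
    Module.finrank_fin_fun, Module.finrank_fin_fun] at h
  omega

def legendreShape (g : ℝ → ℝ → ℝ) (v : Fin 12 → ℝ) : Fin 10 → ℝ :=
  ![v 0, v 1, v 2, v 3, v 4, g (v 3) (v 4) + v 8, (1 / 2) * v 3, -v 5, 0, 0]

theorem range_legendreShape (g : ℝ → ℝ → ℝ) :
    Set.range (legendreShape g) = LinearMap.ker kdvConstraints := by
  ext w
  rw [SetLike.mem_coe, mem_ker_kdvConstraints]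
  constructor
  · rintro ⟨v, rfl⟩
    simp [legendreShape]
  · rintro ⟨h6, h8, h9⟩
    refine ⟨![w 0, w 1, w 2, w 3, w 4, -w 7, 0, 0, w 5 - g (w 3) (w 4), 0, 0, 0], ?_⟩
    ext j
    fin_cases j <;> simp [legendreShape, h6, h8, h9]

theorem range_FLkdv : Set.range FLkdv = LinearMap.ker kdvConstraints :=
  range_legendreShape fun x y => 1 / 2 * y - 3 * x ^ 2

def fderivFLkdv (a : Fin 12 → ℝ) : (Fin 12 → ℝ) →L[ℝ] (Fin 10 → ℝ) :=
  pi (![proj 0, proj 1, proj 2, proj 3, proj 4,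
      (1 / 2 : ℝ) • proj 4 - (6 * a 3) • proj 3 + proj 8, (1 / 2 : ℝ) • proj 3, -proj 5, 0, 0] :
    Fin 10 → (Fin 12 → ℝ) →L[ℝ] ℝ)

theorem hasFDerivAt_FLkdv (a : Fin 12 → ℝ) : HasFDerivAt FLkdv (fderivFLkdv a) a := by
  rw [hasFDerivAt_pi']
  intro i
  rw [fderivFLkdv, proj_pi]
  have hproj (j : Fin 12) := hasFDerivAt_apply (𝕜 := ℝ) j a
  fin_cases i
  · exact hproj 0
  · exact hproj 1
  · exact hproj 2
  · exact hproj 3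
  · exact hproj 4
  · refine ((((hproj 4).const_mul (1 / 2)).sub (((hproj 3).pow 2).const_mul 3)).add
      (hproj 8)).congr_fderiv ?_
    ext v
    simp only [Fin.isValue, Nat.add_one_sub_one, pow_one, nsmul_eq_mul, Nat.cast_ofNat,
      add_apply, sub_apply, smul_apply, proj_apply, smul_eq_mul, Fin.reduceFinMk, Matrix.cons_val]
    ring
  · exact (hproj 3).const_mul (1 / 2)
  · exact (hproj 5).neg
  · exact hasFDerivAt_const (0 : ℝ) a
  · exact hasFDerivAt_const (0 : ℝ) a

theorem range_fderivFLkdv (a : Fin 12 → ℝ) :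
    LinearMap.range (fderivFLkdv a : (Fin 12 → ℝ) →ₗ[ℝ] (Fin 10 → ℝ)) =
      LinearMap.ker kdvConstraints := by
  refine SetLike.coe_injective ?_
  rw [LinearMap.coe_range, ← range_legendreShape fun x y => 1 / 2 * y - 6 * a 3 * x]
  congr 1
  ext v j
  fin_cases j <;> simp [fderivFLkdv, legendreShape]

/-- (a) the Fréchet derivative of `FLkdv` has rank exactly 7 at every
point, so `FLkdv` is nowhere a submersion (the KdV Lagrangian is singular); (b) the image
of `FLkdv` is the submanifold `{p² = ½u₁, p¹¹ = 0, p⁰² = 0}`. -/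
theorem statement15 :
    (∀ a : Fin 12 → ℝ,
      Module.finrank ℝ ↥(LinearMap.range ((fderiv ℝ FLkdv a : (Fin 12 → ℝ) →ₗ[ℝ] (Fin 10 → ℝ)))) = 7) ∧
    (∀ a : Fin 12 → ℝ, ¬ Function.Surjective ⇑(fderiv ℝ FLkdv a)) ∧
    Set.range FLkdv
      = {w : Fin 10 → ℝ | w 6 = (1 / 2) * w 3 ∧ w 8 = 0 ∧ w 9 = 0} := by
  have hrank (a : Fin 12 → ℝ) :
      Module.finrank ℝ ↥(LinearMap.range ((fderiv ℝ FLkdv a : (Fin 12 → ℝ) →ₗ[ℝ] (Fin 10 → ℝ)))) = 7 := by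
    rw [(hasFDerivAt_FLkdv a).fderiv, range_fderivFLkdv, finrank_ker_kdvConstraints]
  refine ⟨hrank, fun a hsurj => ?_, ?_⟩
  · have h := hrank a
    rw [LinearMap.range_eq_top.mpr hsurj, finrank_top, Module.finrank_fin_fun] at h
    omega
  · rw [range_FLkdv]
    ext w
    exact mem_ker_kdvConstraints
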